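/- Let x = (x₁,x₂,x₃) and y = (y₁,y₂,y₃) be vectors in ℤ³ such that there exists z ∈ ℤ³ with det[x y z] = 1. Assume y₁x₃ − x₁y₃ ≠ 0 and y₁x₂ − x₁y₂ ≠ 0. Let e₃ = (0,0,1), and define n¹ = x × y, n² = y × e₃, n³ = x × e₃, and suppose the cone Θ = {v ∈ ℝ³ : n¹·v > 0, n²·v > 0, n³·v < 0} is nonempty. Then there exists t = (t₁,t₂,t₃) ∈ Θ ∩ ℤ³ such that (a) there exists u ∈ ℤ³ with det[x t u] = 1, and (b) gcd(t₁,t₂) = 1 and gcd(t₁,t₃) = 1. -/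

import Mathlib

/-- Determinant of the 3×3 integer matrix with columns `a`, `b`, `c`. -/
def det3 (a b c : Fin 3 → ℤ) : ℤ := Matrix.det (Matrix.transpose (Matrix.of ![a, b, c]))

/-- Cross product in `ℤ³`. -/
def crossInt (a b : Fin 3 → ℤ) : Fin 3 → ℤ :=
  ![a 1 * b 2 - a 2 * b 1, a 2 * b 0 - a 0 * b 2, a 0 * b 1 - a 1 * b 0]

/-- Integer dot product in `ℤ³`. -/
def dotI (a b : Fin 3 → ℤ) : ℤ := a 0 * b 0 + a 1 * b 1 + a 2 * b 2

/-- Dot product of an integer vector with a real vector in `ℝ³`. -/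
def dotR (a : Fin 3 → ℤ) (v : Fin 3 → ℝ) : ℝ :=
  (a 0 : ℝ) * v 0 + (a 1 : ℝ) * v 1 + (a 2 : ℝ) * v 2

/-!
Write `(x 0, x 1) = D • (a, b)` with `D = gcd (x 0) (x 1) > 0` and `a, b` coprime. Every point
`(t 0, t 1)` of the Bezout line `a * t 1 - b * t 0 = 1` has coprime coordinates and
`n₃ ⬝ t = -D < 0`; moving far enough along the line makes `n₂ ⬝ t > 0` and `t 0 ≠ 0`. Then
`t 2 = 1 + m * t 0` is coprime to `t 0`, and `n₁ ⬝ t = det[x y t]` is positive for a suitable `m`.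
Finally the minors of `x × t` are `m₁, m₂, D` with `a * m₁ + b * m₂ = -x 2`, and `det[x y z] = 1`
makes `x 2` coprime to `D`; so `x × t` is a primitive vector and some `u` has `u ⬝ (x × t) = 1`.
-/

lemma det3_apply (a b c : Fin 3 → ℤ) : det3 a b c =
    c 0 * (a 1 * b 2 - a 2 * b 1) + c 1 * (a 2 * b 0 - a 0 * b 2) +
      c 2 * (a 0 * b 1 - a 1 * b 0) := by
  simp only [det3, Matrix.det_transpose, Matrix.det_fin_three, Matrix.of_apply, Matrix.cons_val',
    Matrix.cons_val_fin_one, Matrix.cons_val_zero, Matrix.cons_val_one, Matrix.cons_val]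
  ring

lemma dotI_crossInt (a b c : Fin 3 → ℤ) : dotI (crossInt a b) c = det3 a b c := by
  simp only [dotI, crossInt, det3_apply, Matrix.cons_val_zero, Matrix.cons_val_one,
    Matrix.cons_val]
  ring

lemma dotI_crossInt_e₃ (a c : Fin 3 → ℤ) :
    dotI (crossInt a ![0, 0, 1]) c = a 1 * c 0 - a 0 * c 1 := by
  simp only [dotI, crossInt, Matrix.cons_val_zero, Matrix.cons_val_one, Matrix.cons_val]
  ring

lemma exists_pos_add_mul_and_add_mul_ne_zero (A B C D : ℤ) (hA : A ≠ 0) :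
    ∃ k : ℤ, 0 < B + A * k ∧ (D ≠ 0 → C + D * k ≠ 0) := by
  set N := |B| + |C| + 1 with hNdef
  have hN : 0 ≤ N := by positivity
  -- `k = A * N` makes `A * k ≥ N` beat `B`, and `|D * k| ≥ N` beat `C`.
  refine ⟨A * N, ?_, fun hD hzero => ?_⟩
  · have hAA : 1 ≤ A * A := by nlinarith [Int.one_le_abs hA, abs_mul_abs_self A]
    have : N ≤ A * A * N := le_mul_of_one_le_left hN hAA
    linarith [neg_abs_le B, abs_nonneg C, mul_assoc A A N]
  · have hDA : 1 ≤ |D * A| := Int.one_le_abs (mul_ne_zero hD hA)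
    have hC : |C| = |D * A| * N := by
      rw [eq_neg_of_add_eq_zero_left hzero, abs_neg, ← mul_assoc, abs_mul, abs_of_nonneg hN]
    nlinarith [abs_nonneg B]

lemma IsCoprime.exists_mul_sub_mul_eq_one_pos {a b : ℤ} (hab : IsCoprime a b) {p q : ℤ}
    (hpq : p * a - q * b ≠ 0) :
    ∃ t₀ t₁ : ℤ, a * t₁ - b * t₀ = 1 ∧ 0 < p * t₀ - q * t₁ ∧ t₀ ≠ 0 := by
  obtain ⟨u, v, huv⟩ := hab
  obtain ⟨k, hpos, hne⟩ :=
    exists_pos_add_mul_and_add_mul_ne_zero _ (-(p * v) - q * u) (-v) a hpq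
  have hbez : a * (u + b * k) - b * (-v + a * k) = 1 := by linear_combination huv
  refine ⟨-v + a * k, u + b * k, hbez, by linarith, fun h₀ => ?_⟩
  rcases eq_or_ne a 0 with ha | ha
  · have hv : v = 0 := by simpa [ha] using h₀
    simp [ha, hv] at hbez
  · exact hne ha (by linarith)

lemma exists_isCoprime_pos_add_mul {t c : ℤ} (ht : t ≠ 0) (hc : c ≠ 0) (B : ℤ) :
    ∃ s : ℤ, IsCoprime t s ∧ 0 < B + c * s := by
  obtain ⟨m, hm, -⟩ :=
    exists_pos_add_mul_and_add_mul_ne_zero (c * t) (B + c) 0 0 (mul_ne_zero hc ht)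
  exact ⟨1 + m * t, ⟨-m, 1, by ring⟩, by linarith⟩

lemma isCoprime_of_det3_eq_one {x y z : Fin 3 → ℤ} (h : det3 x y z = 1) {D a b : ℤ}
    (hx₀ : x 0 = a * D) (hx₁ : x 1 = b * D) : IsCoprime (x 2) D :=
  ⟨y 0 * z 1 - y 1 * z 0, a * (y 1 * z 2 - y 2 * z 1) + b * (y 2 * z 0 - y 0 * z 2), by
    rw [← h, det3_apply, hx₀, hx₁]; ring⟩

lemma exists_det3_eq_one_of_isCoprime {x t : Fin 3 → ℤ} {D a b : ℤ}
    (hx₀ : x 0 = a * D) (hx₁ : x 1 = b * D) (hD : IsCoprime (x 2) D)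
    (ht : a * t 1 - b * t 0 = 1) : ∃ u : Fin 3 → ℤ, det3 x t u = 1 := by
  obtain ⟨p, q, hpq⟩ := hD
  refine ⟨![-p * a, -p * b, q], ?_⟩
  simp only [det3_apply, Matrix.cons_val_zero, Matrix.cons_val_one, Matrix.cons_val_two,
    Matrix.head_cons, Matrix.tail_cons, hx₀, hx₁]
  linear_combination hpq + (p * x 2 + q * D) * ht

theorem toric1_general (x y : Fin 3 → ℤ)
    (hz : ∃ z : Fin 3 → ℤ, det3 x y z = 1)
    (h12 : y 0 * x 1 - x 0 * y 1 ≠ 0)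
    (e₃ : Fin 3 → ℤ) (he₃ : e₃ = ![0, 0, 1])
    (n₁ n₂ n₃ : Fin 3 → ℤ)
    (hn₁ : n₁ = crossInt x y) (hn₂ : n₂ = crossInt y e₃) (hn₃ : n₃ = crossInt x e₃) :
    ∃ t : Fin 3 → ℤ,
      (0 < dotI n₁ t ∧ 0 < dotI n₂ t ∧ dotI n₃ t < 0) ∧
      (∃ u : Fin 3 → ℤ, det3 x t u = 1) ∧
      Int.gcd (t 0) (t 1) = 1 ∧ Int.gcd (t 0) (t 2) = 1 := by
  subst he₃ hn₁ hn₂ hn₃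
  obtain ⟨z, hz⟩ := hz
  have hgcd : 0 < Int.gcd (x 0) (x 1) :=
    Int.gcd_pos_iff.mpr (by by_contra! h; exact h12 (by simp [h.1, h.2]))
  obtain ⟨a, b, hab, hx₀, hx₁⟩ := Int.exists_gcd_one hgcd
  set D : ℤ := (Int.gcd (x 0) (x 1) : ℤ)
  obtain ⟨t₀, t₁, hbez, hn₂, ht₀⟩ :=
    (Int.isCoprime_iff_gcd_eq_one.mpr hab).exists_mul_sub_mul_eq_one_pos (p := y 1) (q := y 0)
      (fun h => h12 (by rw [hx₀, hx₁]; linear_combination -D * h))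
  obtain ⟨t₂, ht₀₂, hn₁⟩ := exists_isCoprime_pos_add_mul ht₀
    (c := x 0 * y 1 - x 1 * y 0) (fun h => h12 (by linear_combination -h))
    ((x 1 * y 2 - x 2 * y 1) * t₀ + (x 2 * y 0 - x 0 * y 2) * t₁)
  have ht₀₁ : IsCoprime t₀ t₁ := ⟨-b, a, by linear_combination hbez⟩
  have hn₃ : x 1 * t₀ - x 0 * t₁ = -D := by rw [hx₀, hx₁]; linear_combination -D * hbez
  have hD : 0 < D := Int.natCast_pos.mpr hgcd
  refine ⟨![t₀, t₁, t₂], ⟨?_, ?_, ?_⟩, exists_det3_eq_one_of_isCoprime hx₀ hx₁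
    (isCoprime_of_det3_eq_one hz hx₀ hx₁) hbez,
    Int.isCoprime_iff_gcd_eq_one.mp ht₀₁, Int.isCoprime_iff_gcd_eq_one.mp ht₀₂⟩
  · simp only [dotI_crossInt, det3_apply, Matrix.cons_val_zero, Matrix.cons_val_one,
      Matrix.cons_val_two, Matrix.head_cons, Matrix.tail_cons]
    linarith
  · simpa [dotI_crossInt_e₃] using hn₂
  · simpa [dotI_crossInt_e₃, hn₃] using hD

theorem toric1 (x y : Fin 3 → ℤ)
    (hz : ∃ z : Fin 3 → ℤ, det3 x y z = 1)
    (h13 : y 0 * x 2 - x 0 * y 2 ≠ 0) (h12 : y 0 * x 1 - x 0 * y 1 ≠ 0)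
    (e₃ : Fin 3 → ℤ) (he₃ : e₃ = ![0, 0, 1])
    (n₁ n₂ n₃ : Fin 3 → ℤ)
    (hn₁ : n₁ = crossInt x y) (hn₂ : n₂ = crossInt y e₃) (hn₃ : n₃ = crossInt x e₃)
    (hΘ : ∃ v : Fin 3 → ℝ, 0 < dotR n₁ v ∧ 0 < dotR n₂ v ∧ dotR n₃ v < 0) :
    ∃ t : Fin 3 → ℤ,
      (0 < dotI n₁ t ∧ 0 < dotI n₂ t ∧ dotI n₃ t < 0) ∧
      (∃ u : Fin 3 → ℤ, det3 x t u = 1) ∧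
      Int.gcd (t 0) (t 1) = 1 ∧ Int.gcd (t 0) (t 2) = 1 :=
  toric1_general x y hz h12 e₃ he₃ n₁ n₂ n₃ hn₁ hn₂ hn₃
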